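/- Let (R, m, k) be an F-finite reduced local ring of characteristic p and M a finitely generated R-module. For each e, let M^{(e)} be M with R-action r · m = r^{p^e} m, define A_e(M) = { m ∈ M^{(e)} : m ⊗ u = 0 in M^{(e)} ⊗_R E_R(k) } (u a socle generator of E_R(k)), and P(M) = ∩_{e≫0} A_e(M). Then for r ∈ R and m ∈ M: rm ∈ P(M) if and only if r ∈ P(R) or m ∈ P(M). -/

import Mathlib

set_option linter.unusedVariables false

open TensorProduct Filter IsLocalRing

section Defs

variable (R : Type*) [CommRing R] (p : ℕ) [Fact p.Prime] [CharP R p]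

/-- `M` with the `R`-action twisted by the `e`-th Frobenius: `r • m = r^{p^e} • m`.
For `M = R` this is the module `R^{(e)} ≅ R^{1/p^e}`. -/
def Twist (R : Type*) (p : ℕ) (M : Type*) (e : ℕ) : Type _ := M

instance (M : Type*) [AddCommGroup M] (e : ℕ) : AddCommGroup (Twist R p M e) :=
  inferInstanceAs (AddCommGroup M)

instance (M : Type*) [AddCommGroup M] [Module R M] (e : ℕ) : Module R (Twist R p M e) where
  smul r m := (r ^ p ^ e • (show M from m) : M)
  one_smul m := by
    change (1 : R) ^ p ^ e • (show M from m) = (show M from m); rw [one_pow, one_smul]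
  mul_smul a b m := by
    change (a * b) ^ p ^ e • (show M from m) =
      a ^ p ^ e • (b ^ p ^ e • (show M from m))
    rw [mul_pow, mul_smul]
  smul_zero r := by
    change r ^ p ^ e • (0 : M) = (0 : M); simp
  smul_add r x y := by
    change r ^ p ^ e • ((show M from x) + (show M from y)) =
      r ^ p ^ e • (show M from x) + r ^ p ^ e • (show M from y)
    rw [smul_add]
  add_smul a b m := by
    change (a + b) ^ p ^ e • (show M from m) =
      a ^ p ^ e • (show M from m) + b ^ p ^ e • (show M from m)
    rw [add_pow_char_pow, add_smul]
  zero_smul m := by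
    change (0 : R) ^ p ^ e • (show M from m) = (0 : M)
    rw [zero_pow (pow_ne_zero e (Fact.out : p.Prime).ne_zero), zero_smul]

/-- The identity map `M → Twist R p M e`. -/
def toTwist (R : Type*) (p : ℕ) {M : Type*} (m : M) (e : ℕ) : Twist R p M e := m

/-- The map `φ_{c,e} : R → R^{1/p^e}`, `1 ↦ c^{1/p^e}`, splits over `R`. -/
def SplitsFrob (c : R) (e : ℕ) : Prop :=
  ∃ ψ : Twist R p R e →ₗ[R] R, ψ (toTwist R p c e) = 1

/-- The splitting prime `𝒫(R)`. -/
def SplittingPrimeSet : Set R := { c | ∀ᶠ e in atTop, ¬ SplitsFrob R p c e }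

/-- `R` is `F`-pure: `R → R^{1/p}` splits. -/
def IsFPure : Prop := SplitsFrob R p 1 1

/-- `R` is `F`-finite: `R^{1/p}` is a finite `R`-module. -/
def IsFFinite : Prop := Module.Finite R (Twist R p R 1)

/-- `R` is strongly `F`-regular. -/
def StronglyFRegular : Prop :=
  ∀ c : R, (∀ Q ∈ minimalPrimes R, c ∉ Q) → ∃ e, SplitsFrob R p c e

/-- `n` is the maximal rank of a free direct summand of `M`:
`M ≅ R^n ⊕ N` with `N` having no nonzero free direct summand. -/
def MaxFreeRank (M : Type*) [AddCommGroup M] [Module R M] (n : ℕ) : Prop :=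
  ∃ (N : Submodule R M) (_ : M ≃ₗ[R] ((Fin n → R) × N)),
    ¬ ∃ g : N →ₗ[R] R, Function.Surjective g

end Defs

section Hull

variable (R : Type*) [CommRing R] [IsLocalRing R]

/-- `E` is an injective hull of the residue field, with socle generator `u`. -/
def IsInjHullSocle (E : Type*) [AddCommGroup E] [Module R E] (u : E) : Prop :=
  Module.Injective R E ∧ u ≠ 0 ∧ (∀ r ∈ maximalIdeal R, r • u = 0) ∧
    (∀ x : E, (∀ r ∈ maximalIdeal R, r • x = 0) → x ∈ Submodule.span R {u}) ∧
    ∀ N : Submodule R E, N ≠ ⊥ → u ∈ N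

end Hull

section Ae

variable (R : Type*) [CommRing R] (p : ℕ) [Fact p.Prime] [CharP R p]

/-- The ideal `A_e = {r ∈ R : r ⊗ u = 0 in R^{(e)} ⊗_R E}`. -/
def AeSet (E : Type*) [AddCommGroup E] [Module R E] (u : E) (e : ℕ) : Set R :=
  { r | (toTwist R p r e ⊗ₜ[R] u : Twist R p R e ⊗[R] E) = 0 }

end Ae

/-- The length of a module, as the Krull dimension of its lattice of submodules. -/
noncomputable def moduleLength (R M : Type*) [CommRing R] [AddCommGroup M] [Module R M] :
    WithBot ℕ∞ := Order.krullDim (Submodule R M)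

/-- A regular local ring: the maximal ideal is generated by `dim R` elements. -/
def IsRegularLocal (R : Type*) [CommRing R] [IsLocalRing R] : Prop :=
  IsNoetherianRing R ∧ ∃ s : Finset R,
    Ideal.span (s : Set R) = maximalIdeal R ∧ (s.card : WithBot ℕ∞) = ringKrullDim R


section TwistMaps

variable {R : Type*} [CommRing R] {p : ℕ} [Fact p.Prime] [CharP R p]

lemma twist_smul_def {M : Type*} [AddCommGroup M] [Module R M] {e : ℕ} (r : R)
    (x : Twist R p M e) : r • x = (r ^ p ^ e • (show M from x) : M) := rfl

/-- Multiplication by `s ∈ R` (untwisted) is `R`-linear on `M^{(e)}`. -/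
def twistMulMap {M : Type*} [AddCommGroup M] [Module R M] (s : R) (e : ℕ) :
    Twist R p M e →ₗ[R] Twist R p M e where
  toFun x := (s • (show M from x) : M)
  map_add' x y := by
    show (s • ((show M from x) + (show M from y)) : M)
      = (s • (show M from x) : M) + (s • (show M from y) : M)
    rw [smul_add]
  map_smul' r x := by
    show (s • (r ^ p ^ e • (show M from x)) : M) = (r ^ p ^ e • (s • (show M from x)) : M)
    rw [smul_comm]

/-- For `m ∈ M`, the map `s ↦ s • m` is `R`-linear `R^{(e)} → M^{(e)}`. -/
def twistToModMap {M : Type*} [AddCommGroup M] [Module R M] (m : M) (e : ℕ) :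
    Twist R p R e →ₗ[R] Twist R p M e where
  toFun s := ((show R from s) • m : M)
  map_add' x y := by
    show (((show R from x) + (show R from y)) • m : M)
      = ((show R from x) • m : M) + ((show R from y) • m : M)
    rw [add_smul]
  map_smul' r s := by
    show ((r ^ p ^ e • (show R from s)) • m : M) = (r ^ p ^ e • ((show R from s) • m : M) : M)
    rw [smul_eq_mul, mul_smul]

/-- An `R`-linear map `ψ : M^{(e₂)} → R` induces `M^{(e₁+e₂)} → R^{(e₁)}` (same function). -/
def twistShiftMap {M : Type*} [AddCommGroup M] [Module R M] (e₁ e₂ : ℕ)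
    (ψ : Twist R p M e₂ →ₗ[R] R) :
    Twist R p M (e₁ + e₂) →ₗ[R] Twist R p R e₁ where
  toFun x := ψ (show M from x)
  map_add' x y := ψ.map_add _ _
  map_smul' r x := by
    have key : (r ^ p ^ (e₁ + e₂) • (show M from x) : M)
        = (((r ^ p ^ e₁) ^ p ^ e₂) • (show M from x) : M) := by
      rw [← pow_mul, ← pow_add]
    show ψ ((r ^ p ^ (e₁ + e₂) • (show M from x) : M))
      = (r ^ p ^ e₁ • ψ (show M from x) : R)
    rw [key]
    exact ψ.map_smul (r ^ p ^ e₁) (show M from x)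

end TwistMaps

section TwistFinite

variable {R : Type*} [CommRing R] {p : ℕ} [Fact p.Prime] [CharP R p]

/-- If `M` is finite and `R^{(1)}` is finite, then `M^{(1)}` is finite. -/
lemma twist_one_finite (hFF : IsFFinite R p) (M : Type*) [AddCommGroup M] [Module R M]
    [Module.Finite R M] : Module.Finite R (Twist R p M 1) := by
  have hR : Module.Finite R (Twist R p R 1) := hFF
  obtain ⟨sR, hsR⟩ := hR.fg_top
  obtain ⟨sM, hsM⟩ := (inferInstance : Module.Finite R M).fg_top
  let G : Set (Twist R p M 1) :=
    (fun q : (Twist R p R 1) × M => (((show R from q.1) • q.2 : M) : Twist R p M 1)) ''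
      ((sR : Set (Twist R p R 1)) ×ˢ (sM : Set M))
  refine ⟨Submodule.fg_def.mpr ⟨G, ?_, ?_⟩⟩
  · exact Set.Finite.image _ (Set.Finite.prod (Finset.finite_toSet sR) (Finset.finite_toSet sM))
  rw [eq_top_iff]
  rintro x -
  have claim : ∀ r : Twist R p R 1, ∀ m ∈ sM,
      (((show R from r) • m : M) : Twist R p M 1) ∈ Submodule.span R G := by
    intro r
    have hr : r ∈ Submodule.span R (sR : Set (Twist R p R 1)) := by
      rw [hsR]; trivial
    induction hr using Submodule.span_induction with
    | mem z hz =>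
      intro m hm
      exact Submodule.subset_span ⟨(z, m), ⟨hz, hm⟩, rfl⟩
    | zero =>
      intro m hm
      have h0 : (((show R from (0 : Twist R p R 1)) • m : M) : Twist R p M 1) = 0 := by
        show ((0 : R) • m : M) = 0; simp
      rw [h0]
      exact Submodule.zero_mem _
    | add a b _ _ ha hb =>
      intro m hm
      have h1 : (((show R from a + b) • m : M) : Twist R p M 1)
          = (((show R from a) • m : M) : Twist R p M 1)
            + (((show R from b) • m : M) : Twist R p M 1) := by
        show (((show R from a) + (show R from b)) • m : M) = _
        rw [add_smul]
      rw [h1]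
      exact Submodule.add_mem _ (ha m hm) (hb m hm)
    | smul c a _ ha =>
      intro m hm
      have h1 : ((show R from c • a) • m : M) = c ^ p ^ 1 • ((show R from a) • m : M) := by
        show ((c ^ p ^ 1 • (show R from a)) • m : M) = _
        rw [smul_eq_mul, mul_smul]
      rw [h1]
      exact Submodule.smul_mem _ c (ha m hm)
  have hx : (show M from x) ∈ Submodule.span R (sM : Set M) := by rw [hsM]; trivial
  rw [Submodule.mem_span_finset] at hx
  obtain ⟨f, -, hf⟩ := hx
  have hxx : x = ((∑ m ∈ sM, (f m) • m : M) : Twist R p M 1) := hf.symm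
  rw [hxx]
  exact Submodule.sum_mem _ (fun m hm => claim ((f m : R) : Twist R p R 1) m hm)

/-- `M^{(e+1)} ≃ₗ (M^{(e)})^{(1)}`. -/
def twistSuccEquiv (M : Type*) [AddCommGroup M] [Module R M] (e : ℕ) :
    Twist R p (Twist R p M e) 1 ≃ₗ[R] Twist R p M (e + 1) where
  toFun x := (show M from (show Twist R p M e from x))
  invFun x := (show M from x)
  left_inv x := rfl
  right_inv x := rfl
  map_add' x y := rfl
  map_smul' r x := by
    have hpe : p ^ 1 * p ^ e = p ^ (e + 1) := by rw [pow_one, ← pow_succ']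
    show (((r ^ p ^ 1) ^ p ^ e) • (show M from (show Twist R p M e from x)) : M)
      = (r ^ p ^ (e + 1) • (show M from (show Twist R p M e from x)) : M)
    rw [← pow_mul, hpe]

def twistZeroEquiv (M : Type*) [AddCommGroup M] [Module R M] :
    Twist R p M 0 ≃ₗ[R] M where
  toFun x := (show M from x)
  invFun x := x
  left_inv x := rfl
  right_inv x := rfl
  map_add' x y := rfl
  map_smul' r x := by
    show (r ^ p ^ 0 • (show M from x) : M) = r • (show M from x)
    rw [pow_zero, pow_one]

lemma twist_finite (hFF : IsFFinite R p) (M : Type*) [AddCommGroup M] [Module R M]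
    [Module.Finite R M] : ∀ e : ℕ, Module.Finite R (Twist R p M e) := by
  intro e
  induction e with
  | zero => exact Module.Finite.equiv (twistZeroEquiv M).symm
  | succ e ih =>
    have := twist_one_finite hFF (Twist R p M e)
    exact Module.Finite.equiv (twistSuccEquiv M e)

end TwistFinite

section Smallness

universe w

/-- If a submodule and the quotient by it are `w`-small, so is the module. -/
lemma small_of_submodule_quotient {R : Type*} [Ring R] {M : Type*} [AddCommGroup M]
    [Module R M] (A : Submodule R M) (h1 : Small.{w} A) (h2 : Small.{w} (M ⧸ A)) :
    Small.{w} M := by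
  have hsur : Function.Surjective (Submodule.Quotient.mk (p := A)) :=
    Submodule.Quotient.mk_surjective A
  let sec : (M ⧸ A) → M := Function.surjInv hsur
  have hsec : ∀ y, Submodule.Quotient.mk (sec y) = y := fun y => Function.surjInv_eq hsur y
  let f : M → (M ⧸ A) × A := fun x =>
    (Submodule.Quotient.mk x,
      ⟨x - sec (Submodule.Quotient.mk x), by
        rw [← Submodule.Quotient.mk_eq_zero, Submodule.Quotient.mk_sub, hsec, sub_self]⟩)
  have hf : Function.Injective f := by
    intro x y hxy
    have h1' := congrArg Prod.fst hxy
    have h2' := congrArg (fun z => ((Prod.snd z : A) : M)) hxy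
    simp only [f] at h1' h2'
    have := congrArg (fun z => z + sec (Submodule.Quotient.mk x)) h2'
    simpa [h1', sub_add_cancel] using this
  exact small_of_injective hf

/-- A finitely generated module killed by the maximal ideal is small if the residue field is. -/
lemma small_of_fg_killed {R : Type*} [CommRing R] [IsLocalRing R]
    (hk : Small.{w} (R ⧸ maximalIdeal R)) {M : Type*} [AddCommGroup M] [Module R M]
    [Module.Finite R M] (h : ∀ r ∈ maximalIdeal R, ∀ x : M, r • x = 0) :
    Small.{w} M := by
  obtain ⟨n, σ, hσ⟩ := Module.Finite.exists_fin' R M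
  have hd : ∀ d : Fin n → R, (∀ i, d i ∈ maximalIdeal R) → σ d = 0 := by
    intro d hdm
    rw [pi_eq_sum_univ d, map_sum]
    refine Finset.sum_eq_zero fun i _ => ?_
    rw [map_smul]
    exact h (d i) (hdm i) _
  have hqsur : Function.Surjective (Ideal.Quotient.mk (maximalIdeal R)) :=
    Ideal.Quotient.mk_surjective
  let sec : R ⧸ maximalIdeal R → R := Function.surjInv hqsur
  have hsec : ∀ y, Ideal.Quotient.mk (maximalIdeal R) (sec y) = y :=
    fun y => Function.surjInv_eq hqsur y
  let f : (Fin n → R ⧸ maximalIdeal R) → M := fun w => σ (fun i => sec (w i))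
  have hf : Function.Surjective f := by
    intro x
    obtain ⟨w₀, rfl⟩ := hσ x
    refine ⟨fun i => Ideal.Quotient.mk (maximalIdeal R) (w₀ i), ?_⟩
    show σ _ = σ w₀
    rw [← sub_eq_zero, ← map_sub]
    apply hd
    intro i
    have : Ideal.Quotient.mk (maximalIdeal R)
        (sec (Ideal.Quotient.mk (maximalIdeal R) (w₀ i)) - w₀ i) = 0 := by
      rw [map_sub, hsec, sub_self]
    rwa [Ideal.Quotient.eq_zero_iff_mem] at this
  exact small_of_surjective hf

/-- A finitely generated module killed by a power of the maximal ideal is small. -/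
lemma small_of_fg_pow_killed {R : Type*} [CommRing R] [IsNoetherianRing R] [IsLocalRing R]
    (hk : Small.{w} (R ⧸ maximalIdeal R)) :
    ∀ (t : ℕ) (M : Type*) [AddCommGroup M] [Module R M] [Module.Finite R M],
      (∀ r ∈ (maximalIdeal R) ^ t, ∀ x : M, r • x = 0) → Small.{w} M := by
  intro t
  induction t with
  | zero =>
    intro M _ _ _ h
    have : ∀ x : M, x = 0 := by
      intro x
      have h1 : (1 : R) ∈ (maximalIdeal R) ^ 0 := by
        rw [pow_zero, Ideal.one_eq_top]; trivial
      simpa using h 1 h1 x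
    have hsub : Subsingleton M := ⟨fun a b => by rw [this a, this b]⟩
    exact small_subsingleton M
  | succ t ih =>
    intro M _ _ _ h
    set A : Submodule R M := (maximalIdeal R) ^ t • ⊤ with hA
    haveI : Module.Finite R A := by
      rw [Module.Finite.iff_fg]
      exact IsNoetherian.noetherian A
    have hAkilled : ∀ r ∈ maximalIdeal R, ∀ a : A, r • a = 0 := by
      intro r hr a
      have ha := a.2
      apply Subtype.ext
      show r • (a : M) = 0
      refine Submodule.smul_induction_on ha ?_ ?_
      · intro r' hr' x _
        rw [smul_comm]
        have hmem : r' * r ∈ (maximalIdeal R) ^ (t + 1) := by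
          rw [pow_succ]
          exact Ideal.mul_mem_mul hr' hr
        rw [smul_smul] at *
        exact h (r' * r) hmem x
      · intro x y hx hy
        rw [smul_add, hx, hy, add_zero]
    have hQkilled : ∀ r ∈ (maximalIdeal R) ^ t, ∀ x : M ⧸ A, r • x = 0 := by
      intro r hr x
      obtain ⟨x, rfl⟩ := Submodule.Quotient.mk_surjective A x
      rw [← Submodule.Quotient.mk_smul, Submodule.Quotient.mk_eq_zero]
      exact Submodule.smul_mem_smul hr trivial
    have hQ := ih (M ⧸ A) hQkilled
    have hAsmall := small_of_fg_killed hk hAkilled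
    exact small_of_submodule_quotient A hAsmall hQ

end Smallness

section DualLemma

universe uR uE uN

variable {R : Type uR} [CommRing R] [IsNoetherianRing R] [IsLocalRing R]
variable {E : Type uE} [AddCommGroup E] [Module R E]

omit [IsNoetherianRing R] [IsLocalRing R] in
lemma isUnit_smul_eq_zero' {r : R} (h : IsUnit r) {F : Type uE} [AddCommGroup F] [Module R F]
    {x : F} (hx : r • x = 0) : x = 0 := by
  have h1 : ((h.unit⁻¹ : Rˣ) : R) * r = 1 := h.val_inv_mul
  have h2 := congrArg (fun z => ((h.unit⁻¹ : Rˣ) : R) • z) hx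
  simp only [smul_smul, smul_zero] at h2
  simp only [h1, one_smul] at h2
  exact h2

/-- Duality: for a finitely generated module `N`, `n ⊗ u = 0` in `N ⊗ E` iff every
linear functional `N → R` sends `n` into the maximal ideal. -/
lemma tmul_socle_eq_zero_iff (hinj : Module.Injective R E) {u : E} (hu0 : u ≠ 0)
    (hsoc : ∀ r ∈ maximalIdeal R, r • u = 0)
    (N : Type uN) [AddCommGroup N] [Module R N] [Module.Finite R N] (n : N) :
    (n ⊗ₜ[R] u : N ⊗[R] E) = 0 ↔ ∀ φ : N →ₗ[R] R, φ n ∈ maximalIdeal R := by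
  classical
  constructor
  · intro h0 φ
    by_contra hmem
    rw [IsLocalRing.mem_maximalIdeal, mem_nonunits_iff, not_not] at hmem
    have hunit : IsUnit (φ n) := hmem
    have h1 : (TensorProduct.lid R E) ((φ.rTensor E) (n ⊗ₜ[R] u)) = φ n • u := by
      rw [LinearMap.rTensor_tmul]
      simp
    rw [h0, map_zero, map_zero] at h1
    exact hu0 (isUnit_smul_eq_zero' hunit h1.symm)
  · intro hφ
    obtain ⟨b, π, hπ⟩ := Module.Finite.exists_fin' R N
    obtain ⟨v, hv⟩ := hπ n
    have hKfg : (LinearMap.ker π).FG := IsNoetherian.noetherian _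
    obtain ⟨c, k, hk⟩ := Submodule.fg_iff_exists_fin_generating_family.mp hKfg
    -- dot products
    let dotv : (Fin b → R) →ₗ[R] R :=
      { toFun := fun w => ∑ j, v j * w j
        map_add' := by intro x y; simp [mul_add, Finset.sum_add_distrib]
        map_smul' := by
          intro r x
          simp only [Pi.smul_apply, smul_eq_mul, RingHom.id_apply, Finset.mul_sum]
          exact Finset.sum_congr rfl fun j _ => by ring }
    let β : (Fin b → R) →ₗ[R] (Fin c → R) :=
      LinearMap.pi (fun i =>
        { toFun := fun w => ∑ j, k i j * w j
          map_add' := by intro x y; simp [mul_add, Finset.sum_add_distrib]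
          map_smul' := by
            intro r x
            simp only [Pi.smul_apply, smul_eq_mul, RingHom.id_apply, Finset.mul_sum]
            exact Finset.sum_congr rfl fun j _ => by ring })
    let γ : (Fin b → R) →ₗ[R] E := (LinearMap.toSpanSingleton R E u).comp dotv
    have hβapp : ∀ w i, β w i = ∑ j, k i j * w j := fun w i => rfl
    have hγapp : ∀ w, γ w = (∑ j, v j * w j) • u := fun w => rfl
    -- kernel of β is sent to 0 by γ, thanks to the hypothesis hφ
    have hker : ∀ w : Fin b → R, β w = 0 → γ w = 0 := by
      intro w hw
      let φ₀ : (Fin b → R) →ₗ[R] R :=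
        { toFun := fun x => ∑ j, x j * w j
          map_add' := by intro x y; simp [add_mul, Finset.sum_add_distrib]
          map_smul' := by
            intro r x
            simp only [Pi.smul_apply, smul_eq_mul, RingHom.id_apply, Finset.mul_sum]
            exact Finset.sum_congr rfl fun j _ => by ring }
      have hK0 : LinearMap.ker π ≤ LinearMap.ker φ₀ := by
        rw [← hk, Submodule.span_le]
        rintro _ ⟨i, rfl⟩
        have hi : φ₀ (k i) = 0 := by
          have h1 := congrFun hw i
          have h2 : β w i = ∑ j, k i j * w j := rfl
          have h3 : φ₀ (k i) = ∑ j, k i j * w j := rfl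
          rw [h3, ← h2, h1]; rfl
        simpa [LinearMap.mem_ker] using hi
      obtain ⟨φ, hfac⟩ : ∃ φ : N →ₗ[R] R, ∀ x, φ (π x) = φ₀ x := by
        let eq := π.quotKerEquivOfSurjective hπ
        have heq : ∀ x : Fin b → R, eq (Submodule.Quotient.mk x) = π x := fun x => rfl
        refine ⟨((LinearMap.ker π).liftQ φ₀ hK0).comp eq.symm.toLinearMap, fun x => ?_⟩
        have hx : eq.symm (π x) = Submodule.Quotient.mk x := by
          apply eq.injective
          rw [LinearEquiv.apply_symm_apply, heq]
        simp only [LinearMap.comp_apply, LinearEquiv.coe_coe, hx, Submodule.liftQ_apply]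
      have hm : φ₀ v ∈ maximalIdeal R := by
        have := hφ φ
        rwa [← hv, hfac v] at this
      have : (∑ j, v j * w j) • u = 0 := by
        have hvw : (∑ j, v j * w j) = φ₀ v := by
          show _ = ∑ j, v j * w j
          rfl
        rw [hvw]
        exact hsoc _ hm
      rw [hγapp]; exact this
    -- Artin-Rees
    obtain ⟨s, hs⟩ := Ideal.exists_pow_inf_eq_pow_smul (maximalIdeal R) (LinearMap.range β)
    set t := s + 1 with ht
    set mIt : Submodule R (Fin c → R) := (maximalIdeal R) ^ t • ⊤ with hmIt
    let q : (Fin c → R) →ₗ[R] ((Fin c → R) ⧸ mIt) := mIt.mkQ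
    let βq : (Fin b → R) →ₗ[R] ((Fin c → R) ⧸ mIt) := q.comp β
    have hkerq : ∀ w, βq w = 0 → γ w = 0 := by
      intro w hw
      have hw' : β w ∈ mIt := by
        have : q (β w) = 0 := hw
        rwa [Submodule.mkQ_apply, Submodule.Quotient.mk_eq_zero] at this
      have hmem : β w ∈ (maximalIdeal R) ^ t • (⊤ : Submodule R (Fin c → R)) ⊓
          LinearMap.range β := ⟨hw', ⟨w, rfl⟩⟩
      rw [hs t (by omega)] at hmem
      have hmem' : β w ∈ (maximalIdeal R) • (LinearMap.range β : Submodule R (Fin c → R)) := by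
        have h1 : t - s = 1 := by omega
        rw [h1, pow_one] at hmem
        exact Submodule.smul_mono le_rfl inf_le_right hmem
      rw [← Submodule.map_top, ← Submodule.map_smul''] at hmem'
      obtain ⟨w'', hw'', heqw⟩ := hmem'
      have hker0 : γ (w - w'') = 0 := hker _ (by rw [map_sub, heqw, sub_self])
      have hγw'' : γ w'' = 0 := by
        refine Submodule.smul_induction_on hw'' ?_ ?_
        · intro r hr x _
          rw [map_smul, hγapp, smul_smul]
          exact hsoc _ (Ideal.mul_mem_right _ _ hr)
        · intro x y hx hy
          rw [map_add, hx, hy, add_zero]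
      have hww : (w - w'') + w'' = w := by abel
      calc γ w = γ ((w - w'') + w'') := by rw [hww]
        _ = γ (w - w'') + γ w'' := map_add _ _ _
        _ = 0 := by rw [hker0, hγw'', add_zero]
    -- factor through small modules and extend using injectivity of E
    let Q1 := (Fin b → R) ⧸ (LinearMap.ker βq)
    let ι1 : Q1 →ₗ[R] ((Fin c → R) ⧸ mIt) := (LinearMap.ker βq).liftQ βq le_rfl
    have hι1 : Function.Injective ι1 := by
      rw [← LinearMap.ker_eq_bot]
      exact Submodule.ker_liftQ_eq_bot _ _ _ le_rfl
    let γ1 : Q1 →ₗ[R] E := (LinearMap.ker βq).liftQ γ (fun w hw => by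
      have := hkerq w (by simpa [LinearMap.mem_ker] using hw)
      simpa [LinearMap.mem_ker] using this)
    -- smallness of the residue field
    have hkE : Small.{uE} (R ⧸ maximalIdeal R) := by
      let g : R →ₗ[R] E := LinearMap.toSpanSingleton R E u
      have hkerg : maximalIdeal R ≤ LinearMap.ker g := fun r hr => by
        simpa [g, LinearMap.mem_ker] using hsoc r hr
      let gq : (R ⧸ maximalIdeal R) →ₗ[R] E := (maximalIdeal R).liftQ g hkerg
      have hinjg : Function.Injective gq := by
        rw [← LinearMap.ker_eq_bot, eq_bot_iff]
        intro x hx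
        obtain ⟨r, rfl⟩ := Submodule.Quotient.mk_surjective _ x
        have hru : r • u = 0 := hx
        have hrm : r ∈ maximalIdeal R := by
          by_contra hcon
          rw [IsLocalRing.mem_maximalIdeal, mem_nonunits_iff, not_not] at hcon
          exact hu0 (isUnit_smul_eq_zero' hcon hru)
        rw [Submodule.mem_bot, Submodule.Quotient.mk_eq_zero]
        exact hrm
      exact small_of_injective hinjg
    have hYkilled : ∀ r ∈ (maximalIdeal R) ^ t, ∀ x : (Fin c → R) ⧸ mIt, r • x = 0 := by
      intro r hr x
      obtain ⟨x, rfl⟩ := Submodule.Quotient.mk_surjective _ x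
      rw [← Submodule.Quotient.mk_smul, Submodule.Quotient.mk_eq_zero]
      exact Submodule.smul_mem_smul hr trivial
    have hYsmall : Small.{uE} ((Fin c → R) ⧸ mIt) :=
      small_of_fg_pow_killed hkE t _ hYkilled
    have hQ1small : Small.{uE} Q1 := by
      haveI := hYsmall
      exact small_of_injective hι1
    haveI := hYsmall
    haveI := hQ1small
    let eX : Shrink.{uE} Q1 ≃ₗ[R] Q1 := Shrink.linearEquiv R Q1
    let eY : Shrink.{uE} ((Fin c → R) ⧸ mIt) ≃ₗ[R] ((Fin c → R) ⧸ mIt) :=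
      Shrink.linearEquiv R _
    obtain ⟨h', hh'⟩ := hinj.out (eY.symm.toLinearMap ∘ₗ ι1 ∘ₗ eX.toLinearMap)
      (by
        have hcomp : Function.Injective (⇑eY.symm ∘ ⇑ι1 ∘ ⇑eX) :=
          eY.symm.injective.comp (hι1.comp eX.injective)
        simpa [LinearMap.coe_comp, LinearEquiv.coe_coe, Function.comp] using hcomp)
      (γ1 ∘ₗ eX.toLinearMap)
    let H : (Fin c → R) →ₗ[R] E := (h'.comp eY.symm.toLinearMap).comp q
    have hι1mk : ∀ w : Fin b → R, ι1 (Submodule.Quotient.mk w) = βq w := fun w => rfl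
    have hγ1mk : ∀ w : Fin b → R, γ1 (Submodule.Quotient.mk w) = γ w := fun w => rfl
    have hHβ : ∀ w, H (β w) = γ w := by
      intro w
      have h1 : H (β w) = h' (eY.symm (βq w)) := rfl
      have h2 : eY.symm (βq w) =
          (eY.symm.toLinearMap ∘ₗ ι1 ∘ₗ eX.toLinearMap) (eX.symm (Submodule.Quotient.mk w)) := by
        simp only [LinearMap.comp_apply, LinearEquiv.coe_coe, LinearEquiv.apply_symm_apply, hι1mk]
      rw [h1, h2, hh', LinearMap.comp_apply]
      simp only [LinearEquiv.coe_coe, LinearEquiv.apply_symm_apply]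
      exact hγ1mk w
    -- define the solution vector y
    let y : Fin c → E := fun i => H (Pi.single i 1)
    have hsingle : ∀ (m : ℕ) (j : Fin m) (r : R),
        (Pi.single j r : Fin m → R) = r • (Pi.single j 1 : Fin m → R) := by
      intro m j r
      funext j'
      rcases eq_or_ne j' j with rfl | hne
      · simp
      · simp [Pi.single_eq_of_ne hne]
    have hHx : ∀ x : Fin c → R, H x = ∑ i, x i • y i := by
      intro x
      have hx : x = ∑ i, x i • (Pi.single i 1 : Fin c → R) := by
        conv_lhs => rw [← Finset.univ_sum_single x]
        exact Finset.sum_congr rfl fun i _ => hsingle c i (x i)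
      calc H x = H (∑ i, x i • (Pi.single i 1 : Fin c → R)) := by rw [← hx]
        _ = ∑ i, x i • H (Pi.single i 1) := by
            rw [map_sum]
            exact Finset.sum_congr rfl fun i _ => by rw [map_smul]
        _ = ∑ i, x i • y i := rfl
    have hrel : ∀ j, v j • u = ∑ i, k i j • y i := by
      intro j
      have h1 := hHβ (Pi.single j 1)
      have h2 : γ (Pi.single j 1) = v j • u := by
        rw [hγapp]
        congr 1
        simp [Pi.single_apply, mul_ite]
      have h3 : β (Pi.single j 1) = fun i => k i j := by
        funext i
        rw [hβapp]
        simp [Pi.single_apply, mul_ite]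
      rw [h2, h3, hHx] at h1
      rw [← h1]
    -- the crucial tensor identity
    have hvu : (v ⊗ₜ[R] u : (Fin b → R) ⊗[R] E) = ∑ i, (k i) ⊗ₜ[R] (y i) := by
      calc (v ⊗ₜ[R] u : (Fin b → R) ⊗[R] E)
          = (∑ j, Pi.single j (v j)) ⊗ₜ[R] u := by rw [Finset.univ_sum_single v]
        _ = ∑ j, (Pi.single j (v j)) ⊗ₜ[R] u := TensorProduct.sum_tmul _ _ _
        _ = ∑ j, (Pi.single j (1 : R)) ⊗ₜ[R] (v j • u) := by
            refine Finset.sum_congr rfl fun j _ => ?_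
            rw [hsingle b j (v j), TensorProduct.smul_tmul]
        _ = ∑ j, (Pi.single j (1 : R)) ⊗ₜ[R] (∑ i, k i j • y i) := by
            refine Finset.sum_congr rfl fun j _ => ?_
            rw [hrel j]
        _ = ∑ j, ∑ i, (Pi.single j (1 : R)) ⊗ₜ[R] (k i j • y i) := by
            refine Finset.sum_congr rfl fun j _ => ?_
            rw [TensorProduct.tmul_sum]
        _ = ∑ i, ∑ j, (Pi.single j (1 : R)) ⊗ₜ[R] (k i j • y i) := Finset.sum_comm
        _ = ∑ i, (∑ j, Pi.single j (k i j)) ⊗ₜ[R] y i := by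
            refine Finset.sum_congr rfl fun i _ => ?_
            rw [TensorProduct.sum_tmul]
            refine Finset.sum_congr rfl fun j _ => ?_
            rw [hsingle b j (k i j), TensorProduct.smul_tmul]
        _ = ∑ i, (k i) ⊗ₜ[R] y i := by
            refine Finset.sum_congr rfl fun i _ => ?_
            rw [Finset.univ_sum_single (k i)]
    -- conclusion
    have hn : (n ⊗ₜ[R] u : N ⊗[R] E) = (π.rTensor E) (v ⊗ₜ[R] u) := by
      rw [LinearMap.rTensor_tmul, hv]
    rw [hn, hvu, map_sum]
    refine Finset.sum_eq_zero fun i _ => ?_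
    rw [LinearMap.rTensor_tmul]
    have hki : π (k i) = 0 := by
      have : k i ∈ LinearMap.ker π := by
        rw [← hk]; exact Submodule.subset_span ⟨i, rfl⟩
      simpa [LinearMap.mem_ker] using this
    rw [hki, TensorProduct.zero_tmul]

end DualLemma


/-- For an F-finite reduced local ring `R` of characteristic `p`, a
finitely generated module `M`, with `A_e(M) = {m : m ⊗ u = 0 in M^{(e)} ⊗ E_R(k)}` and
`𝒫(M) = ⋂_{e≫0} A_e(M)` (membership for all `e ≫ 0`), one has, for `r ∈ R` and `m ∈ M`:
`rm ∈ 𝒫(M)` iff `r ∈ 𝒫(R)` or `m ∈ 𝒫(M)`. -/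
theorem smul_mem_splittingPrime_module_iff
    (R : Type*) [CommRing R] [IsNoetherianRing R] [IsLocalRing R] [IsReduced R]
    (p : ℕ) [Fact p.Prime] [CharP R p] (hFF : IsFFinite R p)
    (E : Type*) [AddCommGroup E] [Module R E] (u : E) (hE : IsInjHullSocle R E u)
    (M : Type*) [AddCommGroup M] [Module R M] [Module.Finite R M]
    (r : R) (m : M) :
    (∀ᶠ e in Filter.atTop,
        (toTwist R p (r • m) e ⊗ₜ[R] u : Twist R p M e ⊗[R] E) = 0) ↔
      ((∀ᶠ e in Filter.atTop,
          (toTwist R p r e ⊗ₜ[R] u : Twist R p R e ⊗[R] E) = 0) ∨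
        (∀ᶠ e in Filter.atTop,
          (toTwist R p m e ⊗ₜ[R] u : Twist R p M e ⊗[R] E) = 0)) := by
  obtain ⟨hinj, hu0, hsoc, hsocgen, hess⟩ := hE
  constructor
  · intro h
    by_contra hcon
    push_neg at hcon
    obtain ⟨hr, hm⟩ := hcon
    obtain ⟨B, hB⟩ := Filter.eventually_atTop.mp h
    obtain ⟨e₁, hre, he₁B⟩ := (hr.and_eventually (Filter.eventually_ge_atTop B)).exists
    obtain ⟨e₂, hme⟩ := hm.exists
    haveI hfinR : Module.Finite R (Twist R p R e₁) := twist_finite hFF R e₁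
    haveI hfinM2 : Module.Finite R (Twist R p M e₂) := twist_finite hFF M e₂
    haveI hfinM12 : Module.Finite R (Twist R p M (e₁ + e₂)) := twist_finite hFF M (e₁ + e₂)
    have hφex : ∃ φ : Twist R p R e₁ →ₗ[R] R, φ (toTwist R p r e₁) ∉ maximalIdeal R := by
      by_contra hcon2
      push_neg at hcon2
      exact hre ((tmul_socle_eq_zero_iff hinj hu0 hsoc
        (Twist R p R e₁) (toTwist R p r e₁)).mpr hcon2)
    obtain ⟨φ, hφ⟩ := hφex
    have hψex : ∃ ψ : Twist R p M e₂ →ₗ[R] R, ψ (toTwist R p m e₂) ∉ maximalIdeal R := by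
      by_contra hcon2
      push_neg at hcon2
      exact hme ((tmul_socle_eq_zero_iff hinj hu0 hsoc
        (Twist R p M e₂) (toTwist R p m e₂)).mpr hcon2)
    obtain ⟨ψ, hψ⟩ := hψex
    have hwu : IsUnit (ψ (toTwist R p m e₂)) := by
      rwa [IsLocalRing.mem_maximalIdeal, mem_nonunits_iff, not_not] at hψ
    set w : R := ψ (toTwist R p m e₂) with hwdef
    set w' : R := ((hwu.unit⁻¹ : Rˣ) : R) with hw'def
    let χ : Twist R p M (e₁ + e₂) →ₗ[R] R :=
      φ.comp ((twistMulMap w' e₁).comp (twistShiftMap e₁ e₂ ψ))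
    have h2 : w' * (r * w) = r := by
      have hinv : w' * w = 1 := hwu.val_inv_mul
      calc w' * (r * w) = r * (w' * w) := by ring
        _ = r * 1 := by rw [hinv]
        _ = r := mul_one r
    have hχval : χ (toTwist R p ((r ^ p ^ e₂) • m) (e₁ + e₂)) = φ (toTwist R p r e₁) := by
      have h1 : (twistShiftMap e₁ e₂ ψ) (toTwist R p ((r ^ p ^ e₂) • m) (e₁ + e₂))
          = (r * w : R) := ψ.map_smul r (toTwist R p m e₂)
      calc χ (toTwist R p ((r ^ p ^ e₂) • m) (e₁ + e₂))
          = φ ((twistMulMap w' e₁)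
              ((twistShiftMap e₁ e₂ ψ) (toTwist R p ((r ^ p ^ e₂) • m) (e₁ + e₂)))) := rfl
        _ = φ ((twistMulMap w' e₁) (show Twist R p R e₁ from (r * w : R))) := by rw [h1]
        _ = φ (toTwist R p r e₁) := by
            have h3 : (twistMulMap (p := p) w' e₁) (show Twist R p R e₁ from (r * w : R))
                = toTwist R p r e₁ := by
              show (w' • (r * w) : R) = r
              rw [smul_eq_mul, h2]
            rw [h3]
    have hBe : (toTwist R p (r • m) (e₁ + e₂) ⊗ₜ[R] u :
        Twist R p M (e₁ + e₂) ⊗[R] E) = 0 := hB _ (le_trans he₁B (Nat.le_add_right e₁ e₂))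
    have hmul := congrArg ((twistMulMap (r ^ (p ^ e₂ - 1)) (e₁ + e₂)).rTensor E) hBe
    rw [LinearMap.rTensor_tmul, map_zero] at hmul
    have hppos : 1 ≤ p ^ e₂ := Nat.one_le_pow e₂ p (Fact.out : p.Prime).pos
    have hpow : (r ^ (p ^ e₂ - 1)) • (r • m) = (r ^ p ^ e₂) • m := by
      rw [smul_smul, ← pow_succ]
      congr 2
      omega
    have hbridge : (twistMulMap (p := p) (r ^ (p ^ e₂ - 1)) (e₁ + e₂))
        (toTwist R p (r • m) (e₁ + e₂)) = toTwist R p ((r ^ p ^ e₂) • m) (e₁ + e₂) := hpow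
    rw [hbridge] at hmul
    have hfin := (tmul_socle_eq_zero_iff hinj hu0 hsoc
      (Twist R p M (e₁ + e₂)) (toTwist R p ((r ^ p ^ e₂) • m) (e₁ + e₂))).mp hmul χ
    rw [hχval] at hfin
    exact hφ hfin
  · rintro (hr | hm)
    · filter_upwards [hr] with e he
      have := congrArg ((twistToModMap m e).rTensor E) he
      rw [LinearMap.rTensor_tmul, map_zero] at this
      exact this
    · filter_upwards [hm] with e he
      have := congrArg ((twistMulMap r e).rTensor E) he
      rw [LinearMap.rTensor_tmul, map_zero] at this
      exact this
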